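/- Let ω₀, M, D > 0, X_d > 0, X_q > 0, and let P_m, V_fd ∈ ℝ be constants. Let δ, ω, θ, V : ℝ → ℝ be differentiable with V(t) > 0 for all t. Define V_d = V sin(δ − θ), V_q = V cos(δ − θ), P = (V_fd/X_d) V_d + (1/X_q − 1/X_d) V_d V_q, Q = (V_fd/X_d) V_q − (V_d²/X_q + V_q²/X_d). Assume δ' = ω₀ ω and M ω' = −D ω − P + P_m. Then U(t) = ω₀ M ω²/2 + V_d²/(2 X_q) + (V_fd − V_q)²/(2 X_d) satisfies dU/dt = −D ω₀ ω² + ω₀ ω P_m − P θ' − (Q/V) V'. -/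

import Mathlib

open Real

/-!
Write `(V_d, V_q) = V (sin φ, cos φ)` with `φ = δ - θ`. Along a trajectory this vector rotates
at rate `φ' = ω₀ ω - θ'` and is rescaled at logarithmic rate `V'/V`. Pairing the gradient of the
stored field energy with the rotation gives exactly `P`, and with the rescaling gives `-Q`;
the swing equation turns the rate of the kinetic term into `ω₀ ω (-D ω - P + P_m)`, and the
two `P`-terms combine into `-P θ'`.
-/

section Polar

variable {V φ : ℝ → ℝ} {V' φ' t : ℝ}

theorem HasDerivAt.mul_sin_polar (hV : HasDerivAt V V' t) (hφ : HasDerivAt φ φ' t)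
    (hV0 : V t ≠ 0) :
    HasDerivAt (fun t => V t * Real.sin (φ t))
      (V' / V t * (V t * Real.sin (φ t)) + V t * Real.cos (φ t) * φ') t := by
  refine (hV.mul hφ.sin).congr_deriv ?_
  field_simp

theorem HasDerivAt.mul_cos_polar (hV : HasDerivAt V V' t) (hφ : HasDerivAt φ φ' t)
    (hV0 : V t ≠ 0) :
    HasDerivAt (fun t => V t * Real.cos (φ t))
      (V' / V t * (V t * Real.cos (φ t)) - V t * Real.sin (φ t) * φ') t := by
  refine (hV.mul hφ.cos).congr_deriv ?_
  field_simp
  ring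

end Polar

noncomputable section

namespace VSG

variable (Xd Xq Vfd : ℝ)

def activePower (vd vq : ℝ) : ℝ :=
  Vfd / Xd * vd + (1 / Xq - 1 / Xd) * vd * vq

def reactivePower (vd vq : ℝ) : ℝ :=
  Vfd / Xd * vq - (vd ^ 2 / Xq + vq ^ 2 / Xd)

def storedEnergy (vd vq : ℝ) : ℝ :=
  vd ^ 2 / (2 * Xq) + (Vfd - vq) ^ 2 / (2 * Xd)

theorem hasDerivAt_storedEnergy {vd vq : ℝ → ℝ} {vd' vq' t : ℝ}
    (hd : HasDerivAt vd vd' t) (hq : HasDerivAt vq vq' t) :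
    HasDerivAt (fun t => storedEnergy Xd Xq Vfd (vd t) (vq t))
      (vd t / Xq * vd' - (Vfd - vq t) / Xd * vq') t := by
  refine (((hd.pow 2).div_const (2 * Xq)).add
    (((hq.const_sub Vfd).pow 2).div_const (2 * Xd))).congr_deriv ?_
  ring

theorem storedEnergy_gradient_pairing (vd vq a s : ℝ) :
    vd / Xq * (a * vd + vq * s) - (Vfd - vq) / Xd * (a * vq - vd * s)
      = s * activePower Xd Xq Vfd vd vq - a * reactivePower Xd Xq Vfd vd vq := by
  unfold activePower reactivePower
  ring

theorem hasDerivAt_storedEnergy_polar {V φ : ℝ → ℝ} {V' φ' t : ℝ}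
    (hV : HasDerivAt V V' t) (hφ : HasDerivAt φ φ' t) (hV0 : V t ≠ 0) :
    HasDerivAt (fun t => storedEnergy Xd Xq Vfd (V t * sin (φ t)) (V t * cos (φ t)))
      (φ' * activePower Xd Xq Vfd (V t * sin (φ t)) (V t * cos (φ t))
        - V' / V t * reactivePower Xd Xq Vfd (V t * sin (φ t)) (V t * cos (φ t))) t := by
  rw [← storedEnergy_gradient_pairing]
  exact hasDerivAt_storedEnergy Xd Xq Vfd (hV.mul_sin_polar hφ hV0) (hV.mul_cos_polar hφ hV0)

end VSG

end

theorem vsg_energy_dissipation_general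
    (ω₀ M D Xd Xq Pm Vfd : ℝ)
    (δ ω θ V : ℝ → ℝ)
    (hδ : Differentiable ℝ δ) (hω : Differentiable ℝ ω)
    (hθ : Differentiable ℝ θ) (hV : Differentiable ℝ V)
    (hVpos : ∀ t, 0 < V t)
    (Vd Vq P Q : ℝ → ℝ)
    (hVd : ∀ t, Vd t = V t * Real.sin (δ t - θ t))
    (hVq : ∀ t, Vq t = V t * Real.cos (δ t - θ t))
    (hP : ∀ t, P t = (Vfd / Xd) * Vd t + (1 / Xq - 1 / Xd) * Vd t * Vq t)
    (hQ : ∀ t, Q t = (Vfd / Xd) * Vq t - (Vd t ^ 2 / Xq + Vq t ^ 2 / Xd))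
    (hswing1 : ∀ t, deriv δ t = ω₀ * ω t)
    (hswing2 : ∀ t, M * deriv ω t = -D * ω t - P t + Pm)
    (U : ℝ → ℝ)
    (hU : ∀ t, U t = ω₀ * M * ω t ^ 2 / 2
        + Vd t ^ 2 / (2 * Xq) + (Vfd - Vq t) ^ 2 / (2 * Xd)) :
    ∀ t, HasDerivAt U
      (-D * ω₀ * ω t ^ 2 + ω₀ * ω t * Pm
        - P t * deriv θ t - (Q t / V t) * deriv V t) t := by
  intro t
  have hU_eq : U = fun t => ω₀ * M * ω t ^ 2 / 2
      + VSG.storedEnergy Xd Xq Vfd (V t * sin (δ t - θ t)) (V t * cos (δ t - θ t)) := by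
    funext s
    rw [hU, hVd, hVq, VSG.storedEnergy, add_assoc]
  have hkinetic : HasDerivAt (fun t => ω₀ * M * ω t ^ 2 / 2) (ω₀ * ω t * (M * deriv ω t)) t := by
    refine ((((hω t).hasDerivAt.pow 2).const_mul (ω₀ * M)).div_const 2).congr_deriv ?_
    ring
  have hangle : HasDerivAt (fun t => δ t - θ t) (deriv δ t - deriv θ t) t :=
    (hδ t).hasDerivAt.sub (hθ t).hasDerivAt
  have hfield := VSG.hasDerivAt_storedEnergy_polar Xd Xq Vfd (hV t).hasDerivAt hangle
    (hVpos t).ne'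
  rw [hU_eq]
  refine (hkinetic.add hfield).congr_deriv ?_
  rw [hswing2, hswing1, VSG.activePower, VSG.reactivePower, ← hVd, ← hVq, ← hP, ← hQ]
  ring

/-- Energy dissipation identity for the virtual synchronous
generator (VSG) model. -/
theorem vsg_energy_dissipation
    (ω₀ M D Xd Xq Pm Vfd : ℝ)
    (hω₀ : 0 < ω₀) (hM : 0 < M) (hD : 0 < D) (hXd : 0 < Xd) (hXq : 0 < Xq)
    (δ ω θ V : ℝ → ℝ)
    (hδ : Differentiable ℝ δ) (hω : Differentiable ℝ ω)
    (hθ : Differentiable ℝ θ) (hV : Differentiable ℝ V)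
    (hVpos : ∀ t, 0 < V t)
    (Vd Vq P Q : ℝ → ℝ)
    (hVd : ∀ t, Vd t = V t * Real.sin (δ t - θ t))
    (hVq : ∀ t, Vq t = V t * Real.cos (δ t - θ t))
    (hP : ∀ t, P t = (Vfd / Xd) * Vd t + (1 / Xq - 1 / Xd) * Vd t * Vq t)
    (hQ : ∀ t, Q t = (Vfd / Xd) * Vq t - (Vd t ^ 2 / Xq + Vq t ^ 2 / Xd))
    (hswing1 : ∀ t, deriv δ t = ω₀ * ω t)
    (hswing2 : ∀ t, M * deriv ω t = -D * ω t - P t + Pm)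
    (U : ℝ → ℝ)
    (hU : ∀ t, U t = ω₀ * M * ω t ^ 2 / 2
        + Vd t ^ 2 / (2 * Xq) + (Vfd - Vq t) ^ 2 / (2 * Xd)) :
    ∀ t, HasDerivAt U
      (-D * ω₀ * ω t ^ 2 + ω₀ * ω t * Pm
        - P t * deriv θ t - (Q t / V t) * deriv V t) t :=
  vsg_energy_dissipation_general ω₀ M D Xd Xq Pm Vfd δ ω θ V hδ hω hθ hV hVpos Vd Vq P Q hVd hVq hP
    hQ hswing1 hswing2 U hU
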